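/- Let Z12, Z13, Z23 be positive reals with Z13 < M_H(Z12, Z23), A1 = Z23·(1/Z13 − 1/Z12), A2 = Z12·(1/Z13 − 1/Z23), and let t be any real in [0,1]. Then 1/Z13 − A1^t/Z23 − A2^(1−t)/Z12 ≥ 0. -/

import Mathlib

/-!
In the reciprocal variables `a = 1/Z13`, `b = 1/Z12`, `c = 1/Z23` one has `A1 = (a - b)/c` and
`A2 = (a - c)/b`, both nonnegative since `b + c < a`. Bounding each power by its tangent line at
`1` (weighted AM-GM), `c A1^t + b A2^(1-t) ≤ t(a - b) + (1 - t)c + (1 - t)(a - c) + t b = a`.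
-/

/-- Harmonic-mean-type quantity `M_H(x,y) = 1/(1/x + 1/y)`. -/
noncomputable def MH (x y : ℝ) : ℝ := 1 / (1 / x + 1 / y)

theorem one_div_add_one_div_lt_one_div_of_lt_MH {x y z : ℝ} (hx : 0 < x) (hy : 0 < y) (hz : 0 < z)
    (h : z < MH x y) : 1 / x + 1 / y < 1 / z := by
  rwa [MH, lt_one_div hz (by positivity)] at h

theorem Real.rpow_le_mul_add_one_sub {x t : ℝ} (hx : 0 ≤ x) (ht0 : 0 ≤ t) (ht1 : t ≤ 1) :
    x ^ t ≤ t * x + (1 - t) := by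
  simpa using Real.geom_mean_le_arith_mean2_weighted ht0 (sub_nonneg.2 ht1) hx zero_le_one
    (add_sub_cancel t 1)

theorem mul_div_rpow_add_mul_div_rpow_le {a b c t : ℝ} (hb : 0 < b) (hc : 0 < c)
    (hba : b ≤ a) (hca : c ≤ a) (ht0 : 0 ≤ t) (ht1 : t ≤ 1) :
    c * ((a - b) / c) ^ t + b * ((a - c) / b) ^ (1 - t) ≤ a := by
  have hAb : 0 ≤ (a - b) / c := div_nonneg (sub_nonneg.2 hba) hc.le
  have hAc : 0 ≤ (a - c) / b := div_nonneg (sub_nonneg.2 hca) hb.le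
  calc c * ((a - b) / c) ^ t + b * ((a - c) / b) ^ (1 - t)
      ≤ c * (t * ((a - b) / c) + (1 - t)) + b * ((1 - t) * ((a - c) / b) + (1 - (1 - t))) := by
        gcongr
        · exact Real.rpow_le_mul_add_one_sub hAb ht0 ht1
        · exact Real.rpow_le_mul_add_one_sub hAc (sub_nonneg.2 ht1) (sub_le_self 1 ht0)
    _ = a := by field_simp; ring

theorem asymptotic_coefficient_nonneg (Z12 Z13 Z23 A1 A2 t : ℝ)
    (h12 : 0 < Z12) (h13 : 0 < Z13) (h23 : 0 < Z23)
    (h : Z13 < MH Z12 Z23)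
    (hA1 : A1 = Z23 * (1 / Z13 - 1 / Z12))
    (hA2 : A2 = Z12 * (1 / Z13 - 1 / Z23))
    (ht0 : 0 ≤ t) (ht1 : t ≤ 1) :
    0 ≤ 1 / Z13 - A1 ^ t / Z23 - A2 ^ (1 - t) / Z12 := by
  have hsum := one_div_add_one_div_lt_one_div_of_lt_MH h12 h23 h13 h
  have hb : 0 < 1 / Z12 := one_div_pos.2 h12
  have hc : 0 < 1 / Z23 := one_div_pos.2 h23
  have key := mul_div_rpow_add_mul_div_rpow_le (a := 1 / Z13) hb hc (by linarith) (by linarith) ht0 ht1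
  have hA1' : (1 / Z13 - 1 / Z12) / (1 / Z23) = A1 := by rw [hA1]; field_simp
  have hA2' : (1 / Z13 - 1 / Z23) / (1 / Z12) = A2 := by rw [hA2]; field_simp
  rw [hA1', hA2', one_div_mul_eq_div, one_div_mul_eq_div] at key
  linarith
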